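/- Let A be an associative unital ℚ-algebra and let (J0, Jp, Jm, P) be an osp(1,2)-realization in A. In A ⊗ A ⊗ A, with the intermediate Casimirs Γ_S for subsets S of {1,2,3} as defined in the context, the Bannai–Ito relation {Γ12, Γ13} = Γ23 + 2*Γ1*Γ123 + 2*Γ2*Γ3 holds, where {x,y} = x*y + y*x. -/

import Mathlib

open scoped TensorProduct

/-!
The relations of a realization rewrite every word in `J0, Jp, Jm, P` into a combination of
ordered monomials `Jm^a * J0^b * Jp^c * P^e` (PBW order `Jm < J0 < Jp < P`), and in
`A ⊗ A ⊗ A` pure tensors multiply slotwise. Expanding both sides of the relation into pure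
tensors and normal ordering each tensor factor leaves two ℚ-linear combinations of the same
pure tensors of ordered monomials.
-/

structure IsOspRealization {R : Type*} [Ring R] (J0 Jp Jm P : R) : Prop where
  commutator_J0_Jp : J0 * Jp - Jp * J0 = Jp
  commutator_J0_Jm : J0 * Jm - Jm * J0 = -Jm
  anticommutator_Jp_Jm : Jp * Jm + Jm * Jp = 2 * J0
  commute_J0_P : J0 * P = P * J0
  anticommutator_Jp_P : Jp * P + P * Jp = 0
  anticommutator_Jm_P : Jm * P + P * Jm = 0
  P_sq : P ^ 2 = 1

namespace IsOspRealization

variable {R : Type*} [Ring R] {J0 Jp Jm P : R}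

theorem P_mul_P (ρ : IsOspRealization J0 Jp Jm P) : P * P = 1 := by
  rw [← sq, ρ.P_sq]

theorem P_mul_J0 (ρ : IsOspRealization J0 Jp Jm P) : P * J0 = J0 * P :=
  ρ.commute_J0_P.symm

theorem P_mul_Jp (ρ : IsOspRealization J0 Jp Jm P) : P * Jp = -(Jp * P) :=
  eq_neg_of_add_eq_zero_right ρ.anticommutator_Jp_P

theorem P_mul_Jm (ρ : IsOspRealization J0 Jp Jm P) : P * Jm = -(Jm * P) :=
  eq_neg_of_add_eq_zero_right ρ.anticommutator_Jm_P

theorem Jp_mul_Jm (ρ : IsOspRealization J0 Jp Jm P) : Jp * Jm = 2 * J0 - Jm * Jp :=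
  eq_sub_of_add_eq ρ.anticommutator_Jp_Jm

theorem Jp_mul_J0 (ρ : IsOspRealization J0 Jp Jm P) : Jp * J0 = J0 * Jp - Jp :=
  eq_sub_of_add_eq' (sub_eq_iff_eq_add.mp ρ.commutator_J0_Jp).symm

theorem J0_mul_Jm (ρ : IsOspRealization J0 Jp Jm P) : J0 * Jm = Jm * J0 - Jm := by
  rw [sub_eq_iff_eq_add.mp ρ.commutator_J0_Jm, neg_add_eq_sub]

theorem P_mul_J0_assoc (ρ : IsOspRealization J0 Jp Jm P) (x : R) :
    P * (J0 * x) = J0 * (P * x) := by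
  rw [← mul_assoc, ρ.P_mul_J0, mul_assoc]

theorem P_mul_Jp_assoc (ρ : IsOspRealization J0 Jp Jm P) (x : R) :
    P * (Jp * x) = -(Jp * (P * x)) := by
  rw [← mul_assoc, ρ.P_mul_Jp, neg_mul, mul_assoc]

theorem P_mul_Jm_assoc (ρ : IsOspRealization J0 Jp Jm P) (x : R) :
    P * (Jm * x) = -(Jm * (P * x)) := by
  rw [← mul_assoc, ρ.P_mul_Jm, neg_mul, mul_assoc]

theorem Jp_mul_Jm_assoc (ρ : IsOspRealization J0 Jp Jm P) (x : R) :
    Jp * (Jm * x) = 2 * (J0 * x) - Jm * (Jp * x) := by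
  rw [← mul_assoc, ρ.Jp_mul_Jm, sub_mul, mul_assoc, mul_assoc]

theorem J0_mul_Jm_assoc (ρ : IsOspRealization J0 Jp Jm P) (x : R) :
    J0 * (Jm * x) = Jm * (J0 * x) - Jm * x := by
  rw [← mul_assoc, ρ.J0_mul_Jm, sub_mul, mul_assoc]

end IsOspRealization

/-- Bannai–Ito relation: {Γ12, Γ13} = Γ23 + 2*Γ1*Γ123 + 2*Γ2*Γ3 in A ⊗ A ⊗ A. -/
theorem bannai_ito_relation_12_13 {A : Type*} [Ring A] [Algebra ℚ A]
    (J0 Jp Jm P : A)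
    (h1 : J0*Jp - Jp*J0 = Jp)
    (h2 : J0*Jm - Jm*J0 = -Jm)
    (h3 : Jp*Jm + Jm*Jp = 2*J0)
    (h4 : J0*P = P*J0)
    (h5 : Jp*P + P*Jp = 0)
    (h6 : Jm*P + P*Jm = 0)
    (h7 : P^2 = 1) :
    -- intermediate Casimir operators Γ_S in A ⊗ A ⊗ A for subsets S of {1,2,3}
    let Γ1 : A ⊗[ℚ] (A ⊗[ℚ] A) :=
      (J0 ⊗ₜ[ℚ] ((1:A) ⊗ₜ[ℚ] (1:A))) * (P ⊗ₜ[ℚ] ((1:A) ⊗ₜ[ℚ] (1:A)))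
        - (Jp ⊗ₜ[ℚ] ((1:A) ⊗ₜ[ℚ] (1:A))) * (Jm ⊗ₜ[ℚ] ((1:A) ⊗ₜ[ℚ] (1:A))) * (P ⊗ₜ[ℚ] ((1:A) ⊗ₜ[ℚ] (1:A)))
        - (1/2 : ℚ) • (P ⊗ₜ[ℚ] ((1:A) ⊗ₜ[ℚ] (1:A)))
    let Γ2 : A ⊗[ℚ] (A ⊗[ℚ] A) :=
      ((1:A) ⊗ₜ[ℚ] (J0 ⊗ₜ[ℚ] (1:A))) * ((1:A) ⊗ₜ[ℚ] (P ⊗ₜ[ℚ] (1:A)))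
        - ((1:A) ⊗ₜ[ℚ] (Jp ⊗ₜ[ℚ] (1:A))) * ((1:A) ⊗ₜ[ℚ] (Jm ⊗ₜ[ℚ] (1:A))) * ((1:A) ⊗ₜ[ℚ] (P ⊗ₜ[ℚ] (1:A)))
        - (1/2 : ℚ) • ((1:A) ⊗ₜ[ℚ] (P ⊗ₜ[ℚ] (1:A)))
    let Γ3 : A ⊗[ℚ] (A ⊗[ℚ] A) :=
      ((1:A) ⊗ₜ[ℚ] ((1:A) ⊗ₜ J0)) * ((1:A) ⊗ₜ[ℚ] ((1:A) ⊗ₜ P))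
        - ((1:A) ⊗ₜ[ℚ] ((1:A) ⊗ₜ Jp)) * ((1:A) ⊗ₜ[ℚ] ((1:A) ⊗ₜ Jm)) * ((1:A) ⊗ₜ[ℚ] ((1:A) ⊗ₜ P))
        - (1/2 : ℚ) • ((1:A) ⊗ₜ[ℚ] ((1:A) ⊗ₜ P))
    let Γ12 : A ⊗[ℚ] (A ⊗[ℚ] A) :=
      (J0 ⊗ₜ[ℚ] ((1:A) ⊗ₜ[ℚ] (1:A)) + (1:A) ⊗ₜ[ℚ] (J0 ⊗ₜ[ℚ] (1:A))) * (P ⊗ₜ[ℚ] (P ⊗ₜ[ℚ] (1:A)))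
        - (Jp ⊗ₜ[ℚ] (P ⊗ₜ[ℚ] (1:A)) + (1:A) ⊗ₜ[ℚ] (Jp ⊗ₜ[ℚ] (1:A)))
            * (Jm ⊗ₜ[ℚ] (P ⊗ₜ[ℚ] (1:A)) + (1:A) ⊗ₜ[ℚ] (Jm ⊗ₜ[ℚ] (1:A))) * (P ⊗ₜ[ℚ] (P ⊗ₜ[ℚ] (1:A)))
        - (1/2 : ℚ) • (P ⊗ₜ[ℚ] (P ⊗ₜ[ℚ] (1:A)))
    let Γ13 : A ⊗[ℚ] (A ⊗[ℚ] A) :=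
      (J0 ⊗ₜ[ℚ] ((1:A) ⊗ₜ[ℚ] (1:A)) + (1:A) ⊗ₜ[ℚ] ((1:A) ⊗ₜ J0)) * (P ⊗ₜ[ℚ] ((1:A) ⊗ₜ P))
        - (Jp ⊗ₜ[ℚ] (P ⊗ₜ P) + (1:A) ⊗ₜ[ℚ] ((1:A) ⊗ₜ Jp))
            * (Jm ⊗ₜ[ℚ] (P ⊗ₜ P) + (1:A) ⊗ₜ[ℚ] ((1:A) ⊗ₜ Jm)) * (P ⊗ₜ[ℚ] ((1:A) ⊗ₜ P))
        - (1/2 : ℚ) • (P ⊗ₜ[ℚ] ((1:A) ⊗ₜ P))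
    let Γ23 : A ⊗[ℚ] (A ⊗[ℚ] A) :=
      ((1:A) ⊗ₜ[ℚ] (J0 ⊗ₜ[ℚ] (1:A)) + (1:A) ⊗ₜ[ℚ] ((1:A) ⊗ₜ J0)) * ((1:A) ⊗ₜ[ℚ] (P ⊗ₜ P))
        - ((1:A) ⊗ₜ[ℚ] (Jp ⊗ₜ P) + (1:A) ⊗ₜ[ℚ] ((1:A) ⊗ₜ Jp))
            * ((1:A) ⊗ₜ[ℚ] (Jm ⊗ₜ P) + (1:A) ⊗ₜ[ℚ] ((1:A) ⊗ₜ Jm)) * ((1:A) ⊗ₜ[ℚ] (P ⊗ₜ P))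
        - (1/2 : ℚ) • ((1:A) ⊗ₜ[ℚ] (P ⊗ₜ P))
    let Γ123 : A ⊗[ℚ] (A ⊗[ℚ] A) :=
      (J0 ⊗ₜ[ℚ] ((1:A) ⊗ₜ[ℚ] (1:A)) + (1:A) ⊗ₜ[ℚ] (J0 ⊗ₜ[ℚ] (1:A)) + (1:A) ⊗ₜ[ℚ] ((1:A) ⊗ₜ J0))
          * (P ⊗ₜ[ℚ] (P ⊗ₜ P))
        - (Jp ⊗ₜ[ℚ] (P ⊗ₜ P) + (1:A) ⊗ₜ[ℚ] (Jp ⊗ₜ P) + (1:A) ⊗ₜ[ℚ] ((1:A) ⊗ₜ Jp))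
            * (Jm ⊗ₜ[ℚ] (P ⊗ₜ P) + (1:A) ⊗ₜ[ℚ] (Jm ⊗ₜ P) + (1:A) ⊗ₜ[ℚ] ((1:A) ⊗ₜ Jm))
            * (P ⊗ₜ[ℚ] (P ⊗ₜ P))
        - (1/2 : ℚ) • (P ⊗ₜ[ℚ] (P ⊗ₜ P))
    Γ12*Γ13 + Γ13*Γ12 = Γ23 + 2*Γ1*Γ123 + 2*Γ2*Γ3 := by
  intro Γ1 Γ2 Γ3 Γ12 Γ13 Γ23 Γ123
  have ρ : IsOspRealization J0 Jp Jm P := ⟨h1, h2, h3, h4, h5, h6, h7⟩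
  simp only [Γ1, Γ2, Γ3, Γ12, Γ13, Γ23, Γ123]
  simp only [Algebra.TensorProduct.tmul_mul_tmul, mul_add, add_mul, mul_sub, sub_mul,
    mul_one, one_mul, neg_mul, mul_neg, neg_neg, neg_sub, mul_assoc,
    two_mul, smul_mul_assoc, mul_smul_comm,
    ρ.P_mul_P, ρ.P_mul_Jp, ρ.P_mul_Jm, ρ.Jp_mul_Jm, ρ.Jp_mul_J0, ρ.J0_mul_Jm,
    ρ.P_mul_J0_assoc, ρ.P_mul_Jp_assoc, ρ.P_mul_Jm_assoc, ρ.Jp_mul_Jm_assoc, ρ.J0_mul_Jm_assoc,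
    TensorProduct.tmul_add, TensorProduct.add_tmul, TensorProduct.tmul_sub,
    TensorProduct.sub_tmul]
  simp only [TensorProduct.neg_tmul, TensorProduct.tmul_neg]
  module
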